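/- Let Ω ⊆ ℝⁿ be closed convex, θ : ℝⁿ → ℝ convex, F : ℝⁿ → ℝⁿ monotone and continuous, G symmetric positive semidefinite, λ_k ≥ λ > 0. Suppose w^{k_j} → w★ with w^{k_j} ∈ Ω, G(w^{k_j} − z^{k_j−1}) → 0, and for each j and all w ∈ Ω: θ(w) − θ(w^{k_j}) + ⟨w − w^{k_j}, F(w^{k_j})⟩ ≥ λ_{k_j−1}^{-1}⟨w^{k_j} − w, G(w^{k_j} − z^{k_j−1})⟩. Then w★ ∈ Ω and θ(w) − θ(w★) + ⟨w − w★, F(w★)⟩ ≥ 0 for all w ∈ Ω, i.e., w★ solves the mixed variational inequality. -/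

import Mathlib

open scoped Matrix
open Filter Topology

theorem Filter.Tendsto.dotProduct {α ι R : Type*} [Fintype ι] [Mul R] [AddCommMonoid R]
    [TopologicalSpace R] [ContinuousAdd R] [ContinuousMul R] {l : Filter α}
    {f g : α → ι → R} {x y : ι → R} (hf : Tendsto f l (𝓝 x)) (hg : Tendsto g l (𝓝 y)) :
    Tendsto (fun a => f a ⬝ᵥ g a) l (𝓝 (x ⬝ᵥ y)) :=
  ((continuous_fst.dotProduct continuous_snd).tendsto (x, y)).comp (hf.prodMk_nhds hg)

theorem tendsto_inv_mul_of_le_of_tendsto_zero {α : Type*} {l : Filter α} {c : ℝ} (hc : 0 < c)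
    {lam d : α → ℝ} (hlam : ∀ a, c ≤ lam a) (hd : Tendsto d l (𝓝 0)) :
    Tendsto (fun a => (lam a)⁻¹ * d a) l (𝓝 0) := by
  have hbdd : IsBoundedUnder (· ≤ ·) l fun a => ‖(lam a)⁻¹‖ := by
    refine isBoundedUnder_of ⟨c⁻¹, fun a => ?_⟩
    rw [Real.norm_of_nonneg (inv_nonneg.2 (hc.le.trans (hlam a)))]
    exact inv_anti₀ hc (hlam a)
  exact isBoundedUnder_le_mul_tendsto_zero hbdd hd

def IsMixedVISolution {ι : Type*} [Fintype ι] (Ω : Set (ι → ℝ)) (θ : (ι → ℝ) → ℝ)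
    (F : (ι → ℝ) → ι → ℝ) (w : ι → ℝ) : Prop :=
  w ∈ Ω ∧ ∀ u ∈ Ω, θ u - θ w + (u - w) ⬝ᵥ F w ≥ 0

theorem IsMixedVISolution.of_tendsto {ι α : Type*} [Fintype ι] {l : Filter α} [l.NeBot]
    {Ω : Set (ι → ℝ)} (hΩ : IsClosed Ω) {θ : (ι → ℝ) → ℝ} (hθ : Continuous θ)
    {F : (ι → ℝ) → ι → ℝ} (hF : Continuous F) {w : α → ι → ℝ} {wstar : ι → ℝ}
    (hwΩ : ∀ a, w a ∈ Ω) (hw : Tendsto w l (𝓝 wstar)) {r : α → (ι → ℝ) → ℝ}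
    (hr : ∀ u ∈ Ω, Tendsto (fun a => r a u) l (𝓝 0))
    (hineq : ∀ a, ∀ u ∈ Ω, θ u - θ (w a) + (u - w a) ⬝ᵥ F (w a) ≥ r a u) :
    IsMixedVISolution Ω θ F wstar := by
  refine ⟨hΩ.mem_of_tendsto hw (.of_forall hwΩ), fun u hu => ?_⟩
  have hlhs : Tendsto (fun a => θ u - θ (w a) + (u - w a) ⬝ᵥ F (w a)) l
      (𝓝 (θ u - θ wstar + (u - wstar) ⬝ᵥ F wstar)) :=
    (tendsto_const_nhds.sub ((hθ.tendsto _).comp hw)).add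
      ((tendsto_const_nhds.sub hw).dotProduct ((hF.tendsto _).comp hw))
  exact le_of_tendsto_of_tendsto' (hr u hu) hlhs fun a => hineq a u hu

theorem stmt8_general {n : ℕ} (Ω : Set (Fin n → ℝ)) (hΩc : IsClosed Ω)
    (θ : (Fin n → ℝ) → ℝ) (hθcont : Continuous θ)
    (F : (Fin n → ℝ) → (Fin n → ℝ))
    (hFcont : Continuous F)
    (G : Matrix (Fin n) (Fin n) ℝ)
    (lam₀ : ℝ) (hlam₀ : 0 < lam₀) (lam : ℕ → ℝ) (hlam : ∀ j, lam₀ ≤ lam j)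
    (w z : ℕ → (Fin n → ℝ)) (wstar : Fin n → ℝ)
    (hwΩ : ∀ j, w j ∈ Ω)
    (hwlim : Filter.Tendsto w Filter.atTop (nhds wstar))
    (hGlim : Filter.Tendsto (fun j => G.mulVec (w j - z j)) Filter.atTop (nhds 0))
    (hineq : ∀ j, ∀ u ∈ Ω,
      θ u - θ (w j) + (u - w j) ⬝ᵥ F (w j) ≥
        (lam j)⁻¹ * ((w j - u) ⬝ᵥ G.mulVec (w j - z j))) :
    wstar ∈ Ω ∧ ∀ u ∈ Ω, θ u - θ wstar + (u - wstar) ⬝ᵥ F wstar ≥ 0 := by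
  refine IsMixedVISolution.of_tendsto hΩc hθcont hFcont hwΩ hwlim (fun u _ => ?_) hineq
  have hresidual : Tendsto (fun j => (w j - u) ⬝ᵥ G.mulVec (w j - z j)) atTop (𝓝 0) := by
    simpa only [dotProduct_zero] using (hwlim.sub_const u).dotProduct hGlim
  exact tendsto_inv_mul_of_le_of_tendsto_zero hlam₀ hlam hresidual

/-- Any limit point of the (sub)sequence of inertial proximal iterates solves the mixed VI. -/
theorem stmt8 {n : ℕ} (Ω : Set (Fin n → ℝ)) (hΩc : IsClosed Ω) (hΩconv : Convex ℝ Ω)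
    (θ : (Fin n → ℝ) → ℝ) (hθconv : ConvexOn ℝ Set.univ θ) (hθcont : Continuous θ)
    (F : (Fin n → ℝ) → (Fin n → ℝ)) (hFmono : ∀ u v, 0 ≤ (u - v) ⬝ᵥ (F u - F v))
    (hFcont : Continuous F)
    (G : Matrix (Fin n) (Fin n) ℝ) (hG : G.PosSemidef)
    (lam₀ : ℝ) (hlam₀ : 0 < lam₀) (lam : ℕ → ℝ) (hlam : ∀ j, lam₀ ≤ lam j)
    (w z : ℕ → (Fin n → ℝ)) (wstar : Fin n → ℝ)
    (hwΩ : ∀ j, w j ∈ Ω)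
    (hwlim : Filter.Tendsto w Filter.atTop (nhds wstar))
    (hGlim : Filter.Tendsto (fun j => G.mulVec (w j - z j)) Filter.atTop (nhds 0))
    (hineq : ∀ j, ∀ u ∈ Ω,
      θ u - θ (w j) + (u - w j) ⬝ᵥ F (w j) ≥
        (lam j)⁻¹ * ((w j - u) ⬝ᵥ G.mulVec (w j - z j))) :
    wstar ∈ Ω ∧ ∀ u ∈ Ω, θ u - θ wstar + (u - wstar) ⬝ᵥ F wstar ≥ 0 :=
  stmt8_general Ω hΩc θ hθcont F hFcont G lam₀ hlam₀ lam hlam w z wstar hwΩ hwlim hGlim hineq
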